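/- Let ν, Ek, Hk, El0, Hl0 ∈ ℂ³ with ν·ν = 1, let Z ∈ ℂ with Z ≠ 0, and suppose the impedance boundary condition Hk × ν = (1/Z)·Ek_T holds, where u_T := ν×(u×ν). Then ν·(Ek × Hl0) − ν·(El0 × Hk) = Ek_T·( (Hl0 × ν) − (1/Z)·El0_T ). -/
import Mathlib


/-- Bilinear dot product on `ℂ³` (no conjugation). -/
noncomputable def dotC (u v : Fin 3 → ℂ) : ℂ := ∑ i : Fin 3, u i * v i

/-- Cross product on `ℂ³`. -/
noncomputable def crossC (u v : Fin 3 → ℂ) : Fin 3 → ℂ :=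
  ![u 1 * v 2 - u 2 * v 1, u 2 * v 0 - u 0 * v 2, u 0 * v 1 - u 1 * v 0]

/-- Tangential part `u_T = ν×(u×ν)` of a vector. -/
noncomputable def tangC (ν u : Fin 3 → ℂ) : Fin 3 → ℂ := crossC ν (crossC u ν)

/-- Second surface form of the impedance signal under the impedance boundary
condition `Hk × ν = (1/Z)·Ek_T`:
`ν·(Ek × Hl0) − ν·(El0 × Hk) = Ek_T·((Hl0 × ν) − (1/Z)·El0_T)`. -/
theorem surface_impedance_second_form
    (ν Ek Hk El0 Hl0 : Fin 3 → ℂ) (hν : dotC ν ν = 1) (Z : ℂ) (hZ : Z ≠ 0)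
    (hIBC : crossC Hk ν = (1 / Z) • tangC ν Ek) :
    dotC ν (crossC Ek Hl0) - dotC ν (crossC El0 Hk) =
      dotC (tangC ν Ek) (crossC Hl0 ν - (1 / Z) • tangC ν El0) := by
  have h0 := congrFun hIBC 0
  have h1 := congrFun hIBC 1
  have h2 := congrFun hIBC 2
  simp [crossC, tangC, dotC, Fin.sum_univ_three] at h0 h1 h2 hν ⊢
  linear_combination (-(El0 0))*h0 + (-(El0 1))*h1 + (-(El0 2))*h2 +
    (-(ν 0 * (Ek 1 * Hl0 2 - Ek 2 * Hl0 1) + ν 1 * (Ek 2 * Hl0 0 - Ek 0 * Hl0 2)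
       + ν 2 * (Ek 0 * Hl0 1 - Ek 1 * Hl0 0))
      + (1/Z) * ((ν 1 * (Ek 0 * ν 1 - Ek 1 * ν 0) - ν 2 * (Ek 2 * ν 0 - Ek 0 * ν 2)) * El0 0
        + (ν 2 * (Ek 1 * ν 2 - Ek 2 * ν 1) - ν 0 * (Ek 0 * ν 1 - Ek 1 * ν 0)) * El0 1
        + (ν 0 * (Ek 2 * ν 0 - Ek 0 * ν 2) - ν 1 * (Ek 1 * ν 2 - Ek 2 * ν 1)) * El0 2)) * hν
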